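/- arXiv:2603.26066 — 3 statements merged into one kernel-verified Lean document; each statement's English description precedes it below -/
import Mathlib

section
/- Let K ⊆ ℝ^d be a convex set with nonempty interior and let R be a ν-self-concordant barrier on K. Then for all x, z ∈ int(K), R(z) − R(x) ≤ ν·ln( 1/(1 − π_x(z)) ), where π_x(z) := inf{ t ≥ 0 : x + t^{-1}(z − x) ∈ K } is the Minkowski function of K with pole at x. -/
open MeasureTheory Matrix Finset Filter

/-- The Hessian matrix `∇²R(x)` of `R : ℝ^d → ℝ` at `x`, with entries given by the
second iterated Fréchet derivative evaluated at pairs of standard basis vectors. -/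
noncomputable def hessMat (d : ℕ) (R : (Fin d → ℝ) → ℝ) (x : Fin d → ℝ) :
    Matrix (Fin d) (Fin d) ℝ :=
  Matrix.of fun i j => iteratedFDeriv ℝ 2 R x ![Pi.single i 1, Pi.single j 1]

/-- The local norm `‖h‖_x := √(hᵀ ∇²R(x) h)`. -/
noncomputable def locNorm (d : ℕ) (R : (Fin d → ℝ) → ℝ) (x h : Fin d → ℝ) : ℝ :=
  Real.sqrt (h ⬝ᵥ (hessMat d R x).mulVec h)

/-- The dual local norm `‖h‖*_x := √(hᵀ (∇²R(x))⁻¹ h)`. -/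
noncomputable def dualNorm (d : ℕ) (R : (Fin d → ℝ) → ℝ) (x h : Fin d → ℝ) : ℝ :=
  Real.sqrt (h ⬝ᵥ ((hessMat d R x)⁻¹).mulVec h)

/-- `R` is a `ν`-self-concordant barrier on the convex set `K ⊆ ℝ^d`:
`R` is `C³` and convex on `int K`, blows up at the boundary of `K`, and satisfies
`|D³R(x)[h,h,h]| ≤ 2‖h‖_x³` and `|⟨∇R(x),h⟩| ≤ √ν ‖h‖_x` on `int K`. -/
def IsSCBarrier (d : ℕ) (K : Set (Fin d → ℝ)) (ν : ℝ) (R : (Fin d → ℝ) → ℝ) : Prop :=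
  ContDiffOn ℝ 3 R (interior K) ∧
    ConvexOn ℝ (interior K) R ∧
    (∀ b ∈ frontier K, Filter.Tendsto R (nhdsWithin b (interior K)) Filter.atTop) ∧
    (∀ x ∈ interior K, ∀ h : Fin d → ℝ,
      |iteratedFDeriv ℝ 3 R x ![h, h, h]| ≤ 2 * locNorm d R x h ^ 3) ∧
    (∀ x ∈ interior K, ∀ h : Fin d → ℝ,
      |fderiv ℝ R x h| ≤ Real.sqrt ν * locNorm d R x h)

/-- The shrunk set `K_δ := { x | x/(1−δ) ∈ K }`. -/
def shrink (d : ℕ) (δ : ℝ) (K : Set (Fin d → ℝ)) : Set (Fin d → ℝ) :=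
  {x | (1 - δ)⁻¹ • x ∈ K}

/-!
Along the segment `x_t = x + t (z - x)` consider `φ t = DR(x_t)(z - x)`. For `u ∈ int K` and
`v ∈ K` one has `DR(u)(v - u) ≤ ν`: by the gradient bound, the derivative `ψ` of the convex
function `s ↦ R(u + s(v - u))` satisfies `ψ² ≤ ν ψ'` on `[0, 1)`, so if `ψ 0 > ν` then `1/ψ`
decreases at rate at least `1/ν` and would vanish before `s = ν / ψ 0 < 1`. Taking `u = x_t` and
`v = x + σ⁻¹(z - x)` for the `σ` whose infimum is `π := π_x(z)` gives `φ t (1 - π t) ≤ ν π`, and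
integrating `φ t ≤ ν π / (1 - π t)` over `[0, 1]` gives `R z - R x ≤ ν log (1 / (1 - π))`.
-/

open Set Topology

lemma dotProduct_hessMat_mulVec (d : ℕ) (R : (Fin d → ℝ) → ℝ) (y h : Fin d → ℝ) :
    h ⬝ᵥ hessMat d R y *ᵥ h = fderiv ℝ (fderiv ℝ R) y h h := by
  have : hessMat d R y = LinearMap.toMatrix₂' ℝ (fderiv ℝ (fderiv ℝ R) y).toLinearMap₁₂ := by
    ext i j
    simp [hessMat, iteratedFDeriv_two_apply]
  rw [this, ← Matrix.toLinearMap₂'_apply', Matrix.toLinearMap₂'_toMatrix']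
  rfl

section LineRestriction

variable {E F : Type*} [NormedAddCommGroup E] [NormedSpace ℝ E]
  [NormedAddCommGroup F] [NormedSpace ℝ F]

lemma hasDerivAt_comp_add_smul {f : E → F} {a h : E} {t : ℝ}
    (hf : DifferentiableAt ℝ f (a + t • h)) :
    HasDerivAt (fun s : ℝ => f (a + s • h)) (fderiv ℝ f (a + t • h) h) t :=
  hf.hasFDerivAt.comp_hasDerivAt t <| by
    simpa using ((hasDerivAt_id t).smul_const h).const_add a

lemma hasDerivAt_fderiv_comp_add_smul {f : E → ℝ} {a h : E} {t : ℝ}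
    (hf : DifferentiableAt ℝ (fderiv ℝ f) (a + t • h)) :
    HasDerivAt (fun s : ℝ => fderiv ℝ f (a + s • h) h)
      (fderiv ℝ (fderiv ℝ f) (a + t • h) h h) t := by
  simpa using (hasDerivAt_comp_add_smul hf).clm_apply (hasDerivAt_const t h)

lemma ConvexOn.fderiv_fderiv_apply_self_nonneg {f : E → ℝ} {Ω : Set E}
    (hconv : ConvexOn ℝ Ω f) (hΩ : IsOpen Ω) (hd : DifferentiableOn ℝ f Ω) {y : E}
    (hy : y ∈ Ω) (hd2 : DifferentiableAt ℝ (fderiv ℝ f) y) (h : E) :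
    0 ≤ fderiv ℝ (fderiv ℝ f) y h h := by
  set L : ℝ →ᵃ[ℝ] E := AffineMap.lineMap y (y + h)
  have hL : ∀ s, L s = y + s • h := fun s => by
    simp [L, AffineMap.lineMap_apply_module', add_comm]
  set I := L ⁻¹' Ω
  have hI : I ∈ 𝓝 (0 : ℝ) :=
    (hΩ.preimage AffineMap.lineMap_continuous).mem_nhds (show L 0 ∈ Ω by simpa [hL] using hy)
  have hdI : ∀ s ∈ I, DifferentiableAt ℝ f (y + s • h) := fun s hs =>
    hd.differentiableAt (hΩ.mem_nhds (by simpa [I, hL] using hs))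
  have hmono : MonotoneOn (fun s => fderiv ℝ f (y + s • h) h) I := by
    have hfL : f ∘ L = fun s => f (y + s • h) := funext fun s => by simp [hL]
    have := (hconv.comp_affineMap L).monotoneOn_deriv fun s hs =>
      (hfL ▸ hasDerivAt_comp_add_smul (hdI s hs)).differentiableAt
    rw [hfL] at this
    exact this.congr fun s hs => (hasDerivAt_comp_add_smul (hdI s hs)).deriv
  have hacc : AccPt (0 : ℝ) (𝓟 I) := by
    simpa using (PerfectSpace.univ_preperfect _ (mem_univ (0 : ℝ))).nhds_inter hI
  simpa using (hasDerivAt_fderiv_comp_add_smul (by simpa using hd2)).hasDerivWithinAt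
    |>.nonneg_of_monotoneOn hacc hmono

end LineRestriction

section OneDim

variable {f f' : ℝ → ℝ} {a b : ℝ}

lemma monotoneOn_Icc_of_hasDerivAt_nonneg (hf : ∀ s ∈ Icc a b, HasDerivAt f (f' s) s)
    (hf' : ∀ s ∈ Ioo a b, 0 ≤ f' s) : MonotoneOn f (Icc a b) :=
  monotoneOn_of_hasDerivWithinAt_nonneg (convex_Icc a b)
    (fun s hs => (hf s hs).continuousAt.continuousWithinAt)
    (fun s hs => (hf s (interior_subset hs)).hasDerivWithinAt) (by simpa using hf')

lemma antitoneOn_Icc_of_hasDerivAt_nonpos (hf : ∀ s ∈ Icc a b, HasDerivAt f (f' s) s)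
    (hf' : ∀ s ∈ Ioo a b, f' s ≤ 0) : AntitoneOn f (Icc a b) :=
  antitoneOn_of_hasDerivWithinAt_nonpos (convex_Icc a b)
    (fun s hs => (hf s hs).continuousAt.continuousWithinAt)
    (fun s hs => (hf s (interior_subset hs)).hasDerivWithinAt) (by simpa using hf')

lemma le_of_sq_le_mul_hasDerivAt {φ q : ℝ → ℝ} {ν : ℝ} (hν : 0 < ν)
    (hφ : ∀ s ∈ Ico (0 : ℝ) 1, HasDerivAt φ (q s) s)
    (hb : ∀ s ∈ Ico (0 : ℝ) 1, φ s ^ 2 ≤ ν * q s) : φ 0 ≤ ν := by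
  by_contra! hlt
  have hφ0 : 0 < φ 0 := hν.trans hlt
  set T := ν / φ 0
  have hT0 : 0 < T := div_pos hν hφ0
  have hT1 : T < 1 := (div_lt_one hφ0).mpr hlt
  have hIco : ∀ s ∈ Icc 0 T, s ∈ Ico (0 : ℝ) 1 := fun s hs => ⟨hs.1, hs.2.trans_lt hT1⟩
  have hq : ∀ s ∈ Ico (0 : ℝ) 1, 0 ≤ q s := fun s hs =>
    (mul_nonneg_iff_of_pos_left hν).mp ((sq_nonneg _).trans (hb s hs))
  have hmono : MonotoneOn φ (Icc 0 T) :=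
    monotoneOn_Icc_of_hasDerivAt_nonneg (fun s hs => hφ s (hIco s hs))
      fun s hs => hq s (hIco s (Ioo_subset_Icc_self hs))
  have hpos : ∀ s ∈ Icc 0 T, 0 < φ s := fun s hs =>
    hφ0.trans_le (hmono (left_mem_Icc.mpr hT0.le) hs hs.1)
  have hψ : ∀ s ∈ Icc 0 T, HasDerivAt (fun r => r + ν / φ r) (1 - ν * q s / φ s ^ 2) s :=
    fun s hs =>
      ((hasDerivAt_id' s).fun_add ((hasDerivAt_const s ν).div (hφ s (hIco s hs))
        (hpos s hs).ne')).congr_deriv (by ring)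
  have hanti : AntitoneOn (fun r => r + ν / φ r) (Icc 0 T) :=
    antitoneOn_Icc_of_hasDerivAt_nonpos hψ fun s hs => by
      have hs' := Ioo_subset_Icc_self hs
      rw [sub_nonpos, le_div_iff₀ (pow_pos (hpos s hs') 2), one_mul]
      exact hb s (hIco s hs')
  have hle := hanti (left_mem_Icc.mpr hT0.le) (right_mem_Icc.mpr hT0.le) hT0.le
  have := div_pos hν (hpos T (right_mem_Icc.mpr hT0.le))
  simp only [zero_add] at hle
  linarith

lemma sub_le_mul_log_of_hasDerivAt {g φ : ℝ → ℝ} {ν π : ℝ} (hπ0 : 0 ≤ π) (hπ1 : π < 1)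
    (hg : ∀ t ∈ Icc (0 : ℝ) 1, HasDerivAt g (φ t) t)
    (hφ : ∀ t ∈ Ioo (0 : ℝ) 1, φ t * (1 - π * t) ≤ ν * π) :
    g 1 - g 0 ≤ ν * Real.log (1 / (1 - π)) := by
  have hpos : ∀ t ∈ Icc (0 : ℝ) 1, 0 < 1 - π * t := fun t ht => by nlinarith [ht.2]
  have hG : ∀ t ∈ Icc (0 : ℝ) 1, HasDerivAt (fun r => g r + ν * Real.log (1 - π * r))
      (φ t - ν * π / (1 - π * t)) t := fun t ht => by
    have hlin : HasDerivAt (fun r => 1 - π * r) (-π) t := by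
      simpa using ((hasDerivAt_id t).const_mul π).const_sub 1
    exact ((hg t ht).fun_add (((hlin.log (hpos t ht).ne')).const_mul ν)).congr_deriv (by ring)
  have hanti := antitoneOn_Icc_of_hasDerivAt_nonpos hG fun t ht => by
    have ht' := Ioo_subset_Icc_self ht
    rw [sub_nonpos, le_div_iff₀ (hpos t ht')]
    exact hφ t ht
  have := hanti (left_mem_Icc.mpr zero_le_one) (right_mem_Icc.mpr zero_le_one) zero_le_one
  simp only [mul_zero, sub_zero, Real.log_one, mul_one, add_zero] at this
  rw [one_div, Real.log_inv]
  linarith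

end OneDim

lemma Convex.add_smul_sub_mem_interior_of_mem_interior {E : Type*} [NormedAddCommGroup E]
    [NormedSpace ℝ E] {s : Set E} (hs : Convex ℝ s) {x y : E} (hx : x ∈ interior s)
    (hy : y ∈ s) {t : ℝ} (ht : t ∈ Ico (0 : ℝ) 1) : x + t • (y - x) ∈ interior s := by
  convert hs.add_smul_sub_mem_interior hy hx (t := 1 - t)
    ⟨by linarith [ht.2], by linarith [ht.1]⟩ using 1
  module

noncomputable def minkowskiFunction {E : Type*} [AddCommGroup E] [Module ℝ E] (K : Set E)
    (x z : E) : ℝ :=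
  sInf {t : ℝ | 0 < t ∧ x + t⁻¹ • (z - x) ∈ K}

section Minkowski

variable {E : Type*} [NormedAddCommGroup E] [NormedSpace ℝ E] {K : Set E} {x z : E}

lemma minkowskiFunction_nonneg : 0 ≤ minkowskiFunction K x z :=
  Real.sInf_nonneg fun _ ht => ht.1.le

lemma minkowskiFunction_le {σ : ℝ} (hσ : 0 < σ) (hmem : x + σ⁻¹ • (z - x) ∈ K) :
    minkowskiFunction K x z ≤ σ :=
  csInf_le ⟨0, fun _ ht => ht.1.le⟩ ⟨hσ, hmem⟩

lemma minkowskiFunction_lt_one (hz : z ∈ interior K) : minkowskiFunction K x z < 1 := by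
  have hK : ∀ᶠ s in 𝓝 (1 : ℝ), x + s • (z - x) ∈ K :=
    (Continuous.continuousAt (by fun_prop)).preimage_mem_nhds
      (by simpa using mem_interior_iff_mem_nhds.mp hz)
  obtain ⟨s, hsK, hs1⟩ :=
    ((hK.filter_mono nhdsWithin_le_nhds).and
      (self_mem_nhdsWithin : ∀ᶠ s in 𝓝[>] (1 : ℝ), 1 < s)).exists
  exact (minkowskiFunction_le (inv_pos.mpr (zero_lt_one.trans hs1)) (by rwa [inv_inv])).trans_lt
    (inv_lt_one_of_one_lt₀ hs1)

end Minkowski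

section Barrier

variable {d : ℕ} {K : Set (Fin d → ℝ)} {ν : ℝ} {R : (Fin d → ℝ) → ℝ}

lemma IsSCBarrier.differentiableAt (hR : IsSCBarrier d K ν R) {y : Fin d → ℝ}
    (hy : y ∈ interior K) : DifferentiableAt ℝ R y :=
  (hR.1.differentiableOn (by norm_num)).differentiableAt (isOpen_interior.mem_nhds hy)

lemma IsSCBarrier.fderiv_apply_sub_le (hR : IsSCBarrier d K ν R) (hK : Convex ℝ K)
    (hν : 0 < ν) {u v : Fin d → ℝ} (hu : u ∈ interior K) (hv : v ∈ K) :
    fderiv ℝ R u (v - u) ≤ ν := by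
  obtain ⟨hC, hconv, -, -, hgrad⟩ := hR
  have hd2 : ∀ y ∈ interior K, DifferentiableAt ℝ (fderiv ℝ R) y := fun y hy =>
    ((hC.contDiffAt (isOpen_interior.mem_nhds hy)).fderiv_right (m := 2) (by norm_num))
      |>.differentiableAt (by norm_num)
  have hq : ∀ y ∈ interior K, 0 ≤ fderiv ℝ (fderiv ℝ R) y (v - u) (v - u) := fun y hy =>
    hconv.fderiv_fderiv_apply_self_nonneg isOpen_interior
      (hC.differentiableOn (by norm_num)) hy (hd2 y hy) _
  have hmem := fun s (hs : s ∈ Ico (0 : ℝ) 1) =>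
    hK.add_smul_sub_mem_interior_of_mem_interior hu hv hs
  simpa using le_of_sq_le_mul_hasDerivAt hν
    (φ := fun s => fderiv ℝ R (u + s • (v - u)) (v - u))
    (fun s hs => hasDerivAt_fderiv_comp_add_smul (hd2 _ (hmem s hs)))
    fun s hs => by
      have h := hgrad _ (hmem s hs) (v - u)
      rw [locNorm, dotProduct_hessMat_mulVec, ← Real.sqrt_mul hν.le,
        Real.le_sqrt (abs_nonneg _) (mul_nonneg hν.le (hq _ (hmem s hs))), sq_abs] at h
      exact h

lemma IsSCBarrier.fderiv_mul_one_sub_minkowskiFunction_le (hR : IsSCBarrier d K ν R)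
    (hK : Convex ℝ K) (hν : 0 < ν) {x z : Fin d → ℝ} (hz : z ∈ K) {t : ℝ}
    (ht : x + t • (z - x) ∈ interior K) :
    fderiv ℝ R (x + t • (z - x)) (z - x) * (1 - minkowskiFunction K x z * t) ≤
      ν * minkowskiFunction K x z := by
  set φ := fderiv ℝ R (x + t • (z - x)) (z - x)
  have hS : {σ : ℝ | 0 < σ ∧ x + σ⁻¹ • (z - x) ∈ K} ⊆ {σ | φ * (1 - σ * t) ≤ ν * σ} := by
    rintro σ ⟨hσ, hσK⟩
    have h := hR.fderiv_apply_sub_le hK hν ht hσK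
    rw [show x + σ⁻¹ • (z - x) - (x + t • (z - x)) = (σ⁻¹ - t) • (z - x) by module,
      map_smul, smul_eq_mul] at h
    have heq : φ * (1 - σ * t) = σ * ((σ⁻¹ - t) * φ) := by field_simp
    rw [mem_ofPred_eq, heq, mul_comm ν]
    exact mul_le_mul_of_nonneg_left h hσ.le
  exact (isClosed_le (by fun_prop) (by fun_prop)).closure_subset_iff.mpr hS
    (csInf_mem_closure ⟨1, one_pos, by simpa using hz⟩ ⟨0, fun _ h => h.1.le⟩)

end Barrier

theorem barrier_log_growth_general (d : ℕ) (K : Set (Fin d → ℝ)) (hKconv : Convex ℝ K)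
    (ν : ℝ) (hν : 1 ≤ ν)
    (R : (Fin d → ℝ) → ℝ) (hR : IsSCBarrier d K ν R)
    (x : Fin d → ℝ) (hx : x ∈ interior K) (z : Fin d → ℝ) (hz : z ∈ interior K) :
    R z - R x ≤
      ν * Real.log (1 / (1 - sInf {t : ℝ | 0 < t ∧ x + t⁻¹ • (z - x) ∈ K})) := by
  have hν0 : 0 < ν := by linarith
  have hseg : ∀ t ∈ Icc (0 : ℝ) 1, x + t • (z - x) ∈ interior K := fun t ht =>
    hKconv.interior.add_smul_sub_mem hx hz ht
  have key := sub_le_mul_log_of_hasDerivAt minkowskiFunction_nonneg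
    (minkowskiFunction_lt_one hz) (g := fun t => R (x + t • (z - x)))
    (fun t ht => hasDerivAt_comp_add_smul (hR.differentiableAt (hseg t ht)))
    fun t ht => hR.fderiv_mul_one_sub_minkowskiFunction_le hKconv hν0 (interior_subset hz)
      (hseg t (Ioo_subset_Icc_self ht))
  simp only [one_smul, zero_smul, add_zero, add_sub_cancel] at key
  exact key

/-- **Logarithmic growth of a self-concordant barrier (Lemma 2).**
If `R` is a `ν`-self-concordant barrier on the convex set `K` with nonempty interior,
then for all `x, z ∈ int K`, `R z − R x ≤ ν ln(1/(1 − π_x(z)))`, where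
`π_x(z) = inf { t > 0 : x + t⁻¹(z−x) ∈ K }` is the Minkowski function of `K`
with pole at `x`. -/
theorem barrier_log_growth (d : ℕ) (K : Set (Fin d → ℝ)) (hKconv : Convex ℝ K)
    (hKint : (interior K).Nonempty) (ν : ℝ) (hν : 1 ≤ ν)
    (R : (Fin d → ℝ) → ℝ) (hR : IsSCBarrier d K ν R)
    (x : Fin d → ℝ) (hx : x ∈ interior K) (z : Fin d → ℝ) (hz : z ∈ interior K) :
    R z - R x ≤
      ν * Real.log (1 / (1 - sInf {t : ℝ | 0 < t ∧ x + t⁻¹ • (z - x) ∈ K})) :=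
  barrier_log_growth_general d K hKconv ν hν R hR x hx z hz
end

section
/- Let K ⊆ ℝ^d be a bounded, closed, convex, centrally symmetric set containing the unit Euclidean ball, and let R be a ν-self-concordant barrier on K. Let δ ∈ (0, 2/3] and let K_δ := {x ∈ ℝ^d : x/(1−δ) ∈ K} be the shrunk set. Then for any x, y ∈ K_δ, ‖y − x‖_x ≤ 2·(1/δ − 1)·(ν + 2√ν), where ‖h‖_x := √(hᵀ∇²R(x)h). -/
open MeasureTheory Matrix Finset Filter

/-!
Restrict `R` to the ray `s ↦ x + s • e`, `e = ±(y - x)` with the sign making `φ₁ 0 ≥ 0`, where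
`φₙ s` is the `n`-th derivative along the ray. For `δ ≤ 2/3` the ray stays in `interior K` for
`s < τ = δ / (2 (1 - δ))`, and `2 (1/δ - 1) = 1/τ`, so it suffices that `r τ ≤ ν + 2√ν` for
`r = √(φ₂ 0)`. Self-concordance makes `φ₂^(-1/2)` 1-Lipschitz, hence `φ₂ s ≥ r² / (1 + s r)²`,
and integrating gives `φ₁ α ≥ r √ν / (1 + √ν)` at `α = √ν / r`. The barrier inequality
`φ₁² ≤ ν φ₂` makes `φ₁` blow up within time `ν / φ₁ α` after `α`, so `φ₁ α (τ - α) ≤ ν`, and the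
two bounds combine to `r τ ≤ ν + 2√ν`.
-/

open Set

theorem le_of_hasDerivAt_pos_of_eq {f f' : ℝ → ℝ} {a b m : ℝ} (hab : a ≤ b)
    (hf : ∀ t ∈ Icc a b, HasDerivAt f (f' t) t) (ha : m ≤ f a)
    (hm : ∀ t ∈ Ico a b, f t = m → 0 < f' t) : m ≤ f b :=
  image_le_of_deriv_right_lt_deriv_boundary' (f' := fun _ => 0) continuousOn_const
    (fun _ _ => hasDerivWithinAt_const _ _ _) ha
    (fun t ht => (hf t ht).continuousAt.continuousWithinAt)
    (fun t ht => (hf t (Ico_subset_Icc_self ht)).hasDerivWithinAt)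
    (fun t ht h => hm t ht h.symm) (right_mem_Icc.2 hab)

theorem le_of_hasDerivAt_le {f f' g g' : ℝ → ℝ} {a b : ℝ} (hab : a ≤ b)
    (hf : ∀ t ∈ Icc a b, HasDerivAt f (f' t) t) (hg : ∀ t ∈ Icc a b, HasDerivAt g (g' t) t)
    (ha : f a ≤ g a) (hle : ∀ t ∈ Ico a b, f' t ≤ g' t) : f b ≤ g b :=
  image_le_of_deriv_right_le_deriv_boundary
    (fun t ht => (hf t ht).continuousAt.continuousWithinAt)
    (fun t ht => (hf t (Ico_subset_Icc_self ht)).hasDerivWithinAt) ha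
    (fun t ht => (hg t ht).continuousAt.continuousWithinAt)
    (fun t ht => (hg t (Ico_subset_Icc_self ht)).hasDerivWithinAt) hle (right_mem_Icc.2 hab)

section SelfConcordantLine

variable {φ₁ φ₂ φ₃ : ℝ → ℝ} {τ ν r s : ℝ}

theorem sq_le_mul_sq_of_selfConcordant (hφ₂ : ∀ t ∈ Ico 0 τ, HasDerivAt φ₂ (φ₃ t) t)
    (hφ₃ : ∀ t ∈ Ico 0 τ, |φ₃ t| ≤ 2 * √(φ₂ t) ^ 3) (hr : 0 < r) (h0 : φ₂ 0 = r ^ 2)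
    (hs : s ∈ Ico 0 τ) : r ^ 2 ≤ φ₂ s * (1 + s * r) ^ 2 := by
  by_contra! hlt
  obtain ⟨m, hm, hmr⟩ := exists_between (max_lt hlt (pow_pos hr 2))
  have hderiv : ∀ t ∈ Icc 0 s, HasDerivAt (fun t => φ₂ t * (1 + t * r) ^ 2)
      (φ₃ t * (1 + t * r) ^ 2 + φ₂ t * (2 * (1 + t * r) * r)) t := by
    intro t ht
    have hP : HasDerivAt (fun t => (1 + t * r) ^ 2) (2 * (1 + t * r) * r) t := by
      simpa using (((hasDerivAt_id t).mul_const r).const_add 1).fun_pow 2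
    exact (hφ₂ t ⟨ht.1, ht.2.trans_lt hs.2⟩).mul hP
  -- Fencing at a level `m` strictly below `r²` makes the boundary inequality strict.
  have := le_of_hasDerivAt_pos_of_eq (m := m) hs.1 hderiv
    (by rw [zero_mul, add_zero, one_pow, mul_one, h0]; exact hmr.le) fun t ht heq => by
    set P := 1 + t * r
    have hP : 0 < P := by have := ht.1; positivity
    have hq : 0 < φ₂ t := by
      have : 0 < φ₂ t * P ^ 2 := heq ▸ (le_max_right _ _).trans_lt hm
      exact pos_of_mul_pos_left this (by positivity)
    set σ := √(φ₂ t)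
    have hσ : σ ^ 2 = φ₂ t := Real.sq_sqrt hq.le
    have hσpos : 0 < σ := Real.sqrt_pos.2 hq
    have hσP : σ * P < r := by
      apply lt_of_pow_lt_pow_left₀ 2 hr.le
      rw [mul_pow, hσ, heq]; exact hmr
    have h3 : -(2 * σ ^ 3) ≤ φ₃ t := (abs_le.1 (hφ₃ t ⟨ht.1, ht.2.trans hs.2⟩)).1
    calc (0 : ℝ) < 2 * σ ^ 2 * P * (r - σ * P) := by
          have := sub_pos.2 hσP; positivity
      _ = -(2 * σ ^ 3) * P ^ 2 + σ ^ 2 * (2 * P * r) := by ring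
      _ ≤ φ₃ t * P ^ 2 + φ₂ t * (2 * P * r) := by
          rw [hσ]; gcongr
  linarith [le_max_left (φ₂ s * (1 + s * r) ^ 2) 0]

theorem add_div_le_of_selfConcordant (hφ₁ : ∀ t ∈ Ico 0 τ, HasDerivAt φ₁ (φ₂ t) t)
    (hφ₂ : ∀ t ∈ Ico 0 τ, HasDerivAt φ₂ (φ₃ t) t)
    (hφ₃ : ∀ t ∈ Ico 0 τ, |φ₃ t| ≤ 2 * √(φ₂ t) ^ 3) (hr : 0 < r) (h0 : φ₂ 0 = r ^ 2)
    (hs : s ∈ Ico 0 τ) : φ₁ 0 + r ^ 2 * s / (1 + s * r) ≤ φ₁ s := by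
  have hIcc : ∀ t ∈ Icc 0 s, t ∈ Ico 0 τ := fun t ht => ⟨ht.1, ht.2.trans_lt hs.2⟩
  refine le_of_hasDerivAt_le (f := fun t => φ₁ 0 + r ^ 2 * t / (1 + t * r))
    (f' := fun t => r ^ 2 / (1 + t * r) ^ 2) hs.1 (fun t ht => ?_)
    (fun t ht => hφ₁ t (hIcc t ht)) (by simp) (fun t ht => ?_)
  · have hP : 1 + t * r ≠ 0 := by have := ht.1; positivity
    refine ((((hasDerivAt_id' t).const_mul (r ^ 2)).fun_div
      (((hasDerivAt_id' t).mul_const r).const_add 1) hP).const_add (φ₁ 0)).congr_deriv ?_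
    ring
  · have hP : 0 < 1 + t * r := by have := ht.1; positivity
    rw [div_le_iff₀ (by positivity)]
    exact sq_le_mul_sq_of_selfConcordant hφ₂ hφ₃ hr h0 (hIcc t (Ico_subset_Icc_self ht))

theorem mul_sub_le_of_barrier (hν : 0 ≤ ν) (hφ₁ : ∀ t ∈ Ico 0 τ, HasDerivAt φ₁ (φ₂ t) t)
    (hφ₁_le : ∀ t ∈ Ico 0 τ, |φ₁ t| ≤ √ν * √(φ₂ t)) (hs : s ∈ Ico 0 τ) :
    φ₁ s * (τ - s) ≤ ν := by
  by_contra! hlt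
  set c := φ₁ s
  have hc : 0 < c := pos_of_mul_pos_left (hν.trans_lt hlt) (sub_pos.2 hs.2).le
  obtain ⟨ν', hνν', hν'⟩ := exists_between hlt
  set β := s + ν' / c
  have hβ : β < τ := by
    have : ν' / c < τ - s := by rw [div_lt_iff₀ hc]; linarith
    linarith
  have hsβ : s ≤ β := le_add_of_nonneg_right (div_nonneg (hν.trans hνν'.le) hc.le)
  have hderiv : ∀ t ∈ Icc s β, HasDerivAt (fun t => φ₁ t * (ν' - c * (t - s)))
      (φ₂ t * (ν' - c * (t - s)) + φ₁ t * -c) t := by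
    intro t ht
    have hL : HasDerivAt (fun t => ν' - c * (t - s)) (-c) t := by
      simpa using (((hasDerivAt_id t).sub_const s).const_mul c).const_sub ν'
    exact (hφ₁ t ⟨hs.1.trans ht.1, ht.2.trans_lt hβ⟩).mul hL
  -- `φ₁ t * (ν' - c (t - s))` cannot fall to `ν' c` before `β` (as `ν' > ν`), yet vanishes at `β`.
  have := le_of_hasDerivAt_pos_of_eq (m := ν' * c) hsβ hderiv
    (by rw [sub_self, mul_zero, sub_zero, mul_comm]) fun t ht heq => by
    set L := ν' - c * (t - s)
    have hL : 0 < L := by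
      have : c * (t - s) < ν' := by
        have := ht.2; rw [← lt_div_iff₀' hc]; linarith
      linarith
    have hφ₁t : 0 < φ₁ t := by
      have : 0 < φ₁ t * L := by rw [heq]; exact mul_pos (hν.trans_lt hνν') hc
      exact pos_of_mul_pos_left this hL.le
    have hbound := hφ₁_le t ⟨hs.1.trans ht.1, ht.2.le.trans_lt hβ⟩
    rw [abs_of_pos hφ₁t] at hbound
    have hq : 0 < φ₂ t :=
      Real.sqrt_pos.1 (pos_of_mul_pos_right (hφ₁t.trans_le hbound) (Real.sqrt_nonneg _))
    have hsq : φ₁ t ^ 2 ≤ ν * φ₂ t := by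
      calc φ₁ t ^ 2 ≤ (√ν * √(φ₂ t)) ^ 2 := pow_le_pow_left₀ hφ₁t.le hbound 2
        _ = ν * φ₂ t := by rw [mul_pow, Real.sq_sqrt hν, Real.sq_sqrt hq.le]
    have hνpos : 0 < ν := by nlinarith
    nlinarith [mul_pos (mul_pos hc hφ₁t) (sub_pos.2 hνν')]
  have hβs : ν' - c * (β - s) = 0 := by simp only [β]; field_simp; ring
  rw [hβs, mul_zero] at this
  nlinarith

theorem sqrt_mul_le_of_selfConcordant_barrier (hν : 0 < ν)
    (hφ₁ : ∀ t ∈ Ico 0 τ, HasDerivAt φ₁ (φ₂ t) t) (hφ₂ : ∀ t ∈ Ico 0 τ, HasDerivAt φ₂ (φ₃ t) t)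
    (hφ₃ : ∀ t ∈ Ico 0 τ, |φ₃ t| ≤ 2 * √(φ₂ t) ^ 3)
    (hφ₁_le : ∀ t ∈ Ico 0 τ, |φ₁ t| ≤ √ν * √(φ₂ t)) (h0 : 0 ≤ φ₁ 0) :
    √(φ₂ 0) * τ ≤ ν + 2 * √ν := by
  set r := √(φ₂ 0)
  have hsν : 0 < √ν := Real.sqrt_pos.2 hν
  rcases le_or_gt (r * τ) √ν with hsmall | hlarge
  · linarith
  have hr : 0 < r := (Real.sqrt_nonneg _).lt_of_ne' fun h => by
    rw [show r = 0 from h, zero_mul] at hlarge; linarith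
  have hr0 : φ₂ 0 = r ^ 2 := (Real.sq_sqrt (Real.sqrt_pos.1 hr).le).symm
  set α := √ν / r
  have hrα : r * α = √ν := mul_div_cancel₀ _ hr.ne'
  have hα : α ∈ Ico 0 τ := ⟨by positivity, by rw [div_lt_iff₀' hr]; exact hlarge⟩
  have hφ₁α : r * √ν / (1 + √ν) ≤ φ₁ α := by
    have := add_div_le_of_selfConcordant hφ₁ hφ₂ hφ₃ hr hr0 hα
    rw [mul_comm α r, hrα, pow_two, mul_assoc, hrα] at this
    linarith
  have hblow := mul_sub_le_of_barrier hν.le hφ₁ hφ₁_le hα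
  have key : √ν * (r * τ) ≤ √ν * (ν + 2 * √ν) := by
    have h1 : r * √ν / (1 + √ν) * (τ - α) ≤ ν :=
      (mul_le_mul_of_nonneg_right hφ₁α (sub_nonneg.2 hα.2.le)).trans hblow
    rw [div_mul_eq_mul_div, div_le_iff₀ (by positivity)] at h1
    nlinarith [Real.mul_self_sqrt hν.le]
  exact le_of_mul_le_mul_left key hsν

end SelfConcordantLine

theorem DifferentiableAt.hasDerivAt_iteratedFDeriv_line {E F : Type*} [NormedAddCommGroup E]
    [NormedSpace ℝ E] [NormedAddCommGroup F] [NormedSpace ℝ F] {f : E → F} {n : ℕ} {x e : E}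
    {t : ℝ} (hf : DifferentiableAt ℝ (iteratedFDeriv ℝ n f) (x + t • e)) :
    HasDerivAt (fun s : ℝ => iteratedFDeriv ℝ n f (x + s • e) fun _ => e)
      (iteratedFDeriv ℝ (n + 1) f (x + t • e) fun _ => e) t := by
  have hline : HasDerivAt (fun s : ℝ => x + s • e) e t := by
    simpa using ((hasDerivAt_id t).smul_const e).const_add x
  exact (ContinuousMultilinearMap.apply ℝ (fun _ : Fin n => E) F fun _ => e).hasFDerivAt
    |>.comp_hasDerivAt t (hf.hasFDerivAt.comp_hasDerivAt t hline)

theorem locNorm_eq_sqrt_iteratedFDeriv (d : ℕ) (R : (Fin d → ℝ) → ℝ) (z h : Fin d → ℝ) :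
    locNorm d R z h = √(iteratedFDeriv ℝ 2 R z fun _ => h) := by
  classical
  rw [locNorm, iteratedFDeriv_two_apply]
  congr 1
  conv_rhs => rw [pi_eq_sum_univ' h]
  simp only [hessMat, dotProduct, mulVec, iteratedFDeriv_two_apply, of_apply, map_sum, map_smul,
    FunLike.coe_sum, FunLike.coe_smul, Finset.sum_apply, Pi.smul_apply,
    smul_eq_mul, Finset.mul_sum, Matrix.cons_val_zero, Matrix.cons_val_one]
  rw [Finset.sum_comm]
  exact Finset.sum_congr rfl fun _ _ => Finset.sum_congr rfl fun _ _ => by ring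

theorem locNorm_neg (d : ℕ) (R : (Fin d → ℝ) → ℝ) (z h : Fin d → ℝ) :
    locNorm d R z (-h) = locNorm d R z h := by
  simp [locNorm, mulVec_neg]

theorem IsSCBarrier.locNorm_mul_le {d : ℕ} {K : Set (Fin d → ℝ)} {ν : ℝ} {R : (Fin d → ℝ) → ℝ}
    (hR : IsSCBarrier d K ν R) (hν : 0 < ν) {x e : Fin d → ℝ} {τ : ℝ}
    (hline : ∀ s ∈ Ico 0 τ, x + s • e ∈ interior K) (he : 0 ≤ fderiv ℝ R x e) :
    locNorm d R x e * τ ≤ ν + 2 * √ν := by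
  obtain ⟨hC3, -, -, hD3, hD1⟩ := hR
  set φ : ℕ → ℝ → ℝ := fun n s => iteratedFDeriv ℝ n R (x + s • e) fun _ => e
  have hderiv : ∀ n < 3, ∀ s ∈ Ico 0 τ, HasDerivAt (φ n) (φ (n + 1) s) s := fun n hn s hs =>
    ((hC3.contDiffAt (isOpen_interior.mem_nhds (hline s hs))).differentiableAt_iteratedFDeriv
      (by exact_mod_cast hn)).hasDerivAt_iteratedFDeriv_line
  have hloc : ∀ s, locNorm d R (x + s • e) e = √(φ 2 s) := fun s =>
    locNorm_eq_sqrt_iteratedFDeriv d R _ e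
  have hφ₁ : ∀ s, φ 1 s = fderiv ℝ R (x + s • e) e := fun s => iteratedFDeriv_one_apply _
  have h := sqrt_mul_le_of_selfConcordant_barrier hν (hderiv 1 (by norm_num))
    (hderiv 2 (by norm_num)) (fun s hs => ?_) (fun s hs => ?_) (by simpa [hφ₁] using he)
  · simpa [← hloc] using h
  · have h3 : (![e, e, e] : Fin 3 → Fin d → ℝ) = fun _ => e := by ext i; fin_cases i <;> rfl
    simpa [hloc, h3] using hD3 _ (hline s hs) e
  · simpa [hloc, hφ₁] using hD1 _ (hline s hs) e

theorem Convex.smul_add_smul_mem_interior {E : Type*} [AddCommGroup E] [Module ℝ E]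
    [TopologicalSpace E] [IsTopologicalAddGroup E] [ContinuousConstSMul ℝ E] {K : Set E}
    (hK : Convex ℝ K) (h0 : 0 ∈ interior K) {u v : E} (hu : u ∈ K) (hv : v ∈ K) {a b : ℝ}
    (ha : 0 ≤ a) (hb : 0 ≤ b) (hab : a + b < 1) : a • u + b • v ∈ interior K := by
  rcases (add_nonneg ha hb).eq_or_lt with h | h
  · obtain ⟨rfl, rfl⟩ : a = 0 ∧ b = 0 := by constructor <;> linarith
    simpa using h0
  have hw : (a / (a + b)) • u + (b / (a + b)) • v ∈ K :=
    hK hu hv (by positivity) (by positivity) (by field_simp)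
  convert hK.combo_interior_self_mem_interior h0 hw (sub_pos.2 hab) h.le (by ring) using 1
  match_scalars <;> field_simp

theorem zero_mem_interior_of_forall_sum_sq_le_one {d : ℕ} {K : Set (Fin d → ℝ)}
    (hK : ∀ z : Fin d → ℝ, (∑ i, z i ^ 2) ≤ 1 → z ∈ K) : 0 ∈ interior K :=
  mem_interior.2 ⟨{z | ∑ i, z i ^ 2 < 1}, fun z hz => hK z (le_of_lt hz),
    isOpen_lt (by fun_prop) continuous_const, by simp⟩

theorem add_smul_mem_interior_of_mem_shrink {d : ℕ} {K : Set (Fin d → ℝ)} {δ : ℝ}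
    (hKconv : Convex ℝ K) (hKsym : ∀ z ∈ K, -z ∈ K) (h0 : 0 ∈ interior K) (hδ0 : 0 < δ)
    (hδ1 : δ ≤ 2 / 3) {x y : Fin d → ℝ} (hx : x ∈ shrink d δ K) (hy : y ∈ shrink d δ K) {s : ℝ}
    (hs : s ∈ Ico 0 (δ / (2 * (1 - δ)))) :
    x + s • (y - x) ∈ interior K ∧ x + s • (x - y) ∈ interior K := by
  have hδ : 0 < 1 - δ := by linarith
  have hs' : (1 - δ) * (1 + 2 * s) < 1 := by
    have := hs.2; rw [lt_div_iff₀ (by positivity)] at this; nlinarith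
  constructor
  · convert hKconv.smul_add_smul_mem_interior h0 hx hy (a := (1 - δ) * (1 - s))
      (b := (1 - δ) * s) (by nlinarith [hs.1]) (by nlinarith [hs.1]) (by nlinarith) using 1
    match_scalars <;> field_simp
    ring
  · convert hKconv.smul_add_smul_mem_interior h0 hx (hKsym _ hy) (a := (1 - δ) * (1 + s))
      (b := (1 - δ) * s) (by nlinarith [hs.1]) (by nlinarith [hs.1]) (by nlinarith) using 1
    match_scalars <;> field_simp

theorem locNorm_bound_on_shrink_general (d : ℕ) (K : Set (Fin d → ℝ))
    (hKconv : Convex ℝ K)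
    (hKsym : ∀ z ∈ K, -z ∈ K)
    (hKball : ∀ z : Fin d → ℝ, (∑ i, z i ^ 2) ≤ 1 → z ∈ K)
    (ν : ℝ) (hν : 1 ≤ ν) (R : (Fin d → ℝ) → ℝ) (hR : IsSCBarrier d K ν R)
    (δ : ℝ) (hδ0 : 0 < δ) (hδ1 : δ ≤ 2 / 3)
    (x y : Fin d → ℝ) (hx : x ∈ shrink d δ K) (hy : y ∈ shrink d δ K) :
    locNorm d R x (y - x) ≤ 2 * (1 / δ - 1) * (ν + 2 * Real.sqrt ν) := by
  have hline := fun s (hs : s ∈ Ico 0 (δ / (2 * (1 - δ)))) =>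
    add_smul_mem_interior_of_mem_shrink hKconv hKsym
      (zero_mem_interior_of_forall_sum_sq_le_one hKball) hδ0 hδ1 hx hy hs
  have hδ : 0 < 1 - δ := by linarith
  have hRHS : 2 * (1 / δ - 1) * (ν + 2 * √ν) = (ν + 2 * √ν) / (δ / (2 * (1 - δ))) := by
    field_simp
  rw [hRHS, le_div_iff₀ (by positivity)]
  rcases le_total 0 (fderiv ℝ R x (y - x)) with h | h
  · exact hR.locNorm_mul_le (by linarith) (fun s hs => (hline s hs).1) h
  · rw [← locNorm_neg, neg_sub]
    exact hR.locNorm_mul_le (by linarith) (fun s hs => (hline s hs).2)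
      (by rw [← neg_sub, map_neg]; linarith)

/-- **Uniform bound on local norms over the shrunk set (Lemma 3).**
Let `K ⊆ ℝ^d` be bounded, closed, convex, centrally symmetric and contain the unit
Euclidean ball, and let `R` be a `ν`-self-concordant barrier on `K`.  For
`δ ∈ (0, 2/3]` and any `x, y` in the shrunk set `K_δ = {z : z/(1−δ) ∈ K}`,
`‖y − x‖_x ≤ 2 (1/δ − 1)(ν + 2√ν)`. -/
theorem locNorm_bound_on_shrink (d : ℕ) (K : Set (Fin d → ℝ))
    (hKbdd : Bornology.IsBounded K) (hKcl : IsClosed K) (hKconv : Convex ℝ K)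
    (hKsym : ∀ z ∈ K, -z ∈ K)
    (hKball : ∀ z : Fin d → ℝ, (∑ i, z i ^ 2) ≤ 1 → z ∈ K)
    (ν : ℝ) (hν : 1 ≤ ν) (R : (Fin d → ℝ) → ℝ) (hR : IsSCBarrier d K ν R)
    (δ : ℝ) (hδ0 : 0 < δ) (hδ1 : δ ≤ 2 / 3)
    (x y : Fin d → ℝ) (hx : x ∈ shrink d δ K) (hy : y ∈ shrink d δ K) :
    locNorm d R x (y - x) ≤ 2 * (1 / δ - 1) * (ν + 2 * Real.sqrt ν) :=
  locNorm_bound_on_shrink_general d K hKconv hKsym hKball ν hν R hR δ hδ0 hδ1 x y hx hy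
end

section
/- Let K ⊆ ℝ^d be a convex set containing the unit Euclidean ball (in particular K is infinite), let ε > 0 and T ∈ ℕ. Consider any deterministic black-box optimization algorithm, specified by query maps a_t : ℝ^{t−1} → K for t = 1,…,T and an output map a_out : ℝ^T → K; for a function f : K → ℝ, define recursively x_t(f) := a_t( f(x_1(f)), …, f(x_{t−1}(f)) ) and x̂(f) := a_out( f(x_1(f)), …, f(x_T(f)) ). Then there exists an ε-approximately linear function f : K → ℝ (indeed with linear part θ_f = 0, i.e. |f(x)| ≤ ε for all x ∈ K) such that f(x̂(f)) − min_{x∈K} f(x) ≥ 2ε, where the minimum is attained. -/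
/-!
Run the algorithm on the constant function `ε`. It queries finitely many points and outputs one
more; since `K` is infinite, some `z ∈ K` is none of them. Lowering the constant function to `-ε`
at `z` alone changes no observed value, so the algorithm behaves identically and outputs a point
where the new function is `ε`, while its minimum `-ε` is attained at `z`.
-/

open Finset

theorem infinite_of_forall_sum_sq_le_one_mem {d : ℕ} (hd : 1 ≤ d) {K : Set (Fin d → ℝ)}
    (hKball : ∀ z : Fin d → ℝ, (∑ i, z i ^ 2) ≤ 1 → z ∈ K) : K.Infinite := by
  let i₀ : Fin d := ⟨0, hd⟩
  have hinj := Pi.single_injective (M := fun _ : Fin d => ℝ) i₀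
  refine ((Set.Icc_infinite zero_lt_one).image hinj.injOn).mono ?_
  rintro _ ⟨c, ⟨hc₀, hc₁⟩, rfl⟩
  apply hKball
  rw [Finset.sum_eq_single i₀ (fun i _ hi => by simp [hi]) (by simp)]
  simp only [Pi.single_eq_same]
  nlinarith

section Trajectory

variable {α β : Type*} {a : ℕ → (ℕ → β) → α} {X : (α → β) → ℕ → α} {f g : α → β} {T : ℕ}

theorem trajectory_eq_of_eq_on_queries
    (ha_dep : ∀ t v w, (∀ τ, 1 ≤ τ → τ < t → v τ = w τ) → a t v = a t w)
    (hX : ∀ f t, X f t = a t fun τ => f (X f τ))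
    (hfg : ∀ τ, 1 ≤ τ → τ ≤ T → f (X g τ) = g (X g τ)) :
    ∀ t ≤ T, X f t = X g t := by
  intro t
  induction t using Nat.strong_induction_on with
  | _ t ih =>
    intro ht
    rw [hX f t, hX g t]
    refine ha_dep t _ _ fun τ h₁ h₂ => ?_
    rw [ih τ h₂ (by omega)]
    exact hfg τ h₁ (by omega)

theorem output_eq_of_eq_on_queries {aout : (ℕ → β) → α} {Xout : (α → β) → α}
    (ha_dep : ∀ t v w, (∀ τ, 1 ≤ τ → τ < t → v τ = w τ) → a t v = a t w)
    (haout_dep : ∀ v w, (∀ τ, 1 ≤ τ → τ ≤ T → v τ = w τ) → aout v = aout w)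
    (hX : ∀ f t, X f t = a t fun τ => f (X f τ))
    (hXout : ∀ f, Xout f = aout fun τ => f (X f τ))
    (hfg : ∀ τ, 1 ≤ τ → τ ≤ T → f (X g τ) = g (X g τ)) :
    Xout f = Xout g := by
  rw [hXout f, hXout g]
  refine haout_dep _ _ fun τ h₁ h₂ => ?_
  rw [trajectory_eq_of_eq_on_queries ha_dep hX hfg τ h₂]
  exact hfg τ h₁ h₂

end Trajectory

theorem blackbox_lower_bound_deterministic_general (d T : ℕ) (hd : 1 ≤ d)
    (K : Set (Fin d → ℝ))
    (hKball : ∀ z : Fin d → ℝ, (∑ i, z i ^ 2) ≤ 1 → z ∈ K)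
    (ε : ℝ) (hε : 0 < ε)
    (a : ℕ → (ℕ → ℝ) → (Fin d → ℝ))
    (ha_dep : ∀ t v w, (∀ τ, 1 ≤ τ → τ < t → v τ = w τ) → a t v = a t w)
    (aout : (ℕ → ℝ) → (Fin d → ℝ))
    (haout_dep : ∀ v w, (∀ τ, 1 ≤ τ → τ ≤ T → v τ = w τ) → aout v = aout w)
    (X : ((Fin d → ℝ) → ℝ) → ℕ → (Fin d → ℝ))
    (hX : ∀ f t, X f t = a t fun τ => f (X f τ))
    (Xout : ((Fin d → ℝ) → ℝ) → (Fin d → ℝ))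
    (hXout : ∀ f, Xout f = aout fun τ => f (X f τ)) :
    ∃ f : (Fin d → ℝ) → ℝ, (∀ z ∈ K, |f z| ≤ ε) ∧
      ∃ xm ∈ K, (∀ z ∈ K, f xm ≤ f z) ∧ 2 * ε ≤ f (Xout f) - f xm := by
  classical
  let g : (Fin d → ℝ) → ℝ := fun _ => ε
  let queried : Finset (Fin d → ℝ) := insert (Xout g) ((Icc 1 T).image (X g))
  obtain ⟨z, hzK, hz⟩ :=
    (infinite_of_forall_sum_sq_le_one_mem hd hKball).exists_notMem_finset queried
  let f := Function.update g z (-ε)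
  have hfg : ∀ τ, 1 ≤ τ → τ ≤ T → f (X g τ) = g (X g τ) := fun τ h₁ h₂ =>
    Function.update_of_ne
      (fun h => hz (mem_insert_of_mem (mem_image.2 ⟨τ, mem_Icc.2 ⟨h₁, h₂⟩, h⟩))) _ _
  have hout : Xout f = Xout g := output_eq_of_eq_on_queries ha_dep haout_dep hX hXout hfg
  have hfout : f (Xout f) = ε := by
    rw [hout]
    exact Function.update_of_ne (fun h : Xout g = z => hz (h ▸ mem_insert_self _ _)) _ _
  have hfz : f z = -ε := Function.update_self _ _ _
  have hf_values : ∀ x, f x = -ε ∨ f x = ε := fun x => by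
    by_cases hx : x = z
    · exact .inl (hx ▸ hfz)
    · exact .inr (Function.update_of_ne hx _ _)
  refine ⟨f, fun x _ => ?_, z, hzK, fun x _ => ?_, by linarith⟩
  · rcases hf_values x with h | h <;> rw [h] <;> simp [abs_of_pos hε]
  · rcases hf_values x with h | h <;> linarith

/-- **Black-box lower bound, deterministic case (Lemma 9).**
Let `K ⊆ ℝ^d` (`d ≥ 1`) be convex and contain the unit Euclidean ball, `ε > 0` and
`T ∈ ℕ`.  Consider a deterministic black-box algorithm given by query maps
`a t : ℝ^{t−1} → K` (depending only on the previously observed values) and an output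
map `aout : ℝ^T → K`, with trajectory `X f t = a t (f(X f 1), …, f(X f (t−1)))` and
output `Xout f = aout (f(X f 1), …, f(X f T))`.  Then there is an `ε`-approximately
linear function `f` — indeed with linear part `θ_f = 0`, i.e. `|f| ≤ ε` on `K` —
whose minimum over `K` is attained and with `f(Xout f) − min_{x∈K} f(x) ≥ 2ε`. -/
theorem blackbox_lower_bound_deterministic (d T : ℕ) (hd : 1 ≤ d)
    (K : Set (Fin d → ℝ)) (hKconv : Convex ℝ K)
    (hKball : ∀ z : Fin d → ℝ, (∑ i, z i ^ 2) ≤ 1 → z ∈ K)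
    (ε : ℝ) (hε : 0 < ε)
    (a : ℕ → (ℕ → ℝ) → (Fin d → ℝ))
    (ha_mem : ∀ t v, a t v ∈ K)
    (ha_dep : ∀ t v w, (∀ τ, 1 ≤ τ → τ < t → v τ = w τ) → a t v = a t w)
    (aout : (ℕ → ℝ) → (Fin d → ℝ))
    (haout_mem : ∀ v, aout v ∈ K)
    (haout_dep : ∀ v w, (∀ τ, 1 ≤ τ → τ ≤ T → v τ = w τ) → aout v = aout w)
    (X : ((Fin d → ℝ) → ℝ) → ℕ → (Fin d → ℝ))
    (hX : ∀ f t, X f t = a t fun τ => f (X f τ))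
    (Xout : ((Fin d → ℝ) → ℝ) → (Fin d → ℝ))
    (hXout : ∀ f, Xout f = aout fun τ => f (X f τ)) :
    ∃ f : (Fin d → ℝ) → ℝ, (∀ z ∈ K, |f z| ≤ ε) ∧
      ∃ xm ∈ K, (∀ z ∈ K, f xm ≤ f z) ∧ 2 * ε ≤ f (Xout f) - f xm :=
  blackbox_lower_bound_deterministic_general d T hd K hKball ε hε a ha_dep aout haout_dep X hX Xout
    hXout
end
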